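/- For every pair of distinct elements φ,ψ∈N̂ₙ, the node expression φ∧ψ is XP⁻-inconsistent, i.e., XP⁻⊢φ∧ψ≡⊥. -/

import Mathlib

attribute [local instance] Classical.propDecidable

mutual
/-- Path expressions of `XPath↓⁻` (no inequality tests in the language). -/
inductive PathExpr (A : Type) : Type
  | eps : PathExpr A
  | down : PathExpr A
  | test : NodeExpr A → PathExpr A
  | comp : PathExpr A → PathExpr A → PathExpr A
  | union : PathExpr A → PathExpr A → PathExpr A

/-- Node expressions of `XPath↓⁻` (no inequality tests in the language). -/
inductive NodeExpr (A : Type) : Type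
  | lab : A → NodeExpr A
  | neg : NodeExpr A → NodeExpr A
  | conj : NodeExpr A → NodeExpr A → NodeExpr A
  | diam : PathExpr A → NodeExpr A
  | eqTest : PathExpr A → PathExpr A → NodeExpr A
end

namespace XPathMinus

variable {A : Type}

/-- Defined disjunction `φ ∨ ψ := ¬(¬φ ∧ ¬ψ)`. -/
def nOr (φ ψ : NodeExpr A) : NodeExpr A := .neg (.conj (.neg φ) (.neg ψ))

/-- `⊤ := ⟨ε⟩`. -/
def topN : NodeExpr A := .diam .eps

/-- `⊥ := ¬⊤`. -/
def botN : NodeExpr A := .neg topN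

/-- `⊥̄ := [¬⟨ε⟩]`. -/
def botP : PathExpr A := .test (.neg (.diam .eps))

def bigOr (l : List (NodeExpr A)) : NodeExpr A := l.foldr nOr botN

def bigUnion (l : List (PathExpr A)) : PathExpr A := l.foldr PathExpr.union botP

/-- A data tree: a tree (connected, acyclic, unique parents except the root)
whose nodes carry labels from `A`, together with a partition of the nodes
(presented as an equivalence relation `eqd`). -/
structure DataTree (A : Type) where
  X : Type
  child : X → X → Prop
  root : X
  label : X → A
  eqd : X → X → Prop
  eqd_equiv : Equivalence eqd
  parent_unique : ∀ ⦃x y z : X⦄, child x z → child y z → x = y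
  root_no_parent : ∀ x : X, ¬ child x root
  reach : ∀ x : X, Relation.ReflTransGen child root x
  acyclic : ∀ x : X, ¬ Relation.TransGen child x x

mutual
/-- Semantics of path expressions. -/
def psem (T : DataTree A) : PathExpr A → T.X → T.X → Prop
  | .eps, x, y => x = y
  | .down, x, y => T.child x y
  | .test φ, x, y => x = y ∧ nsem T φ x
  | .comp α β, x, z => ∃ y, psem T α x y ∧ psem T β y z
  | .union α β, x, y => psem T α x y ∨ psem T β x y

/-- Semantics of node expressions. -/
def nsem (T : DataTree A) : NodeExpr A → T.X → Prop
  | .lab a, x => T.label x = a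
  | .neg φ, x => ¬ nsem T φ x
  | .conj φ ψ, x => nsem T φ x ∧ nsem T ψ x
  | .diam α, x => ∃ y, psem T α x y
  | .eqTest α β, x => ∃ y z, psem T α x y ∧ psem T β x z ∧ T.eqd y z
end

/-- Semantic equivalence of node expressions: same denotation in every data tree. -/
def nodeValid (φ ψ : NodeExpr A) : Prop :=
  ∀ (T : DataTree A) (x : T.X), nsem T φ x ↔ nsem T ψ x

/-- Semantic equivalence of path expressions: same denotation in every data tree. -/
def pathValid (α β : PathExpr A) : Prop :=
  ∀ (T : DataTree A) (x y : T.X), psem T α x y ↔ psem T β x y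

mutual
/-- Derivability of node equivalences in the axiomatic system `XP⁻`. -/
inductive NDer {A : Type} [Fintype A] : NodeExpr A → NodeExpr A → Prop
  | refl (φ : NodeExpr A) : NDer φ φ
  | symm {φ ψ : NodeExpr A} : NDer φ ψ → NDer ψ φ
  | trans {φ ψ ρ : NodeExpr A} : NDer φ ψ → NDer ψ ρ → NDer φ ρ
  | congr_neg {φ ψ : NodeExpr A} : NDer φ ψ → NDer (.neg φ) (.neg ψ)
  | congr_conj {φ φ' ψ ψ' : NodeExpr A} :
      NDer φ φ' → NDer ψ ψ' → NDer (.conj φ ψ) (.conj φ' ψ')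
  | congr_diam {α β : PathExpr A} : PDer α β → NDer (.diam α) (.diam β)
  | congr_eqTest {α α' β β' : PathExpr A} :
      PDer α α' → PDer β β' → NDer (.eqTest α β) (.eqTest α' β')
  | lbAx1 : NDer topN (bigOr ((Finset.univ : Finset A).toList.map NodeExpr.lab))
  | lbAx2 {a b : A} : a ≠ b → NDer botN (.conj (.lab a) (.lab b))
  | ndAx1 (φ ψ : NodeExpr A) :
      NDer φ (nOr (.neg (nOr (.neg φ) ψ)) (.neg (nOr (.neg φ) (.neg ψ))))
  | ndAx2 (φ : NodeExpr A) : NDer (.diam (.test φ)) φ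
  | ndAx3 (α β : PathExpr A) : NDer (.diam (.union α β)) (nOr (.diam α) (.diam β))
  | ndAx4 (α β : PathExpr A) : NDer (.diam (.comp α β)) (.diam (.comp α (.test (.diam β))))
  | eqAx1 (α β : PathExpr A) : NDer (.eqTest α β) (.eqTest β α)
  | eqAx2 (α β γ : PathExpr A) :
      NDer (.eqTest (.union α β) γ) (nOr (.eqTest α γ) (.eqTest β γ))
  | eqAx3 (φ : NodeExpr A) (α β : PathExpr A) :
      NDer (.conj φ (.eqTest α β)) (.eqTest (.comp (.test φ) α) β)
  | eqAx4 (α β : PathExpr A) : NDer (nOr (.eqTest α β) (.diam α)) (.diam α)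
  | eqAx5 (γ α β : PathExpr A) :
      NDer (nOr (.diam (.comp γ (.test (.eqTest α β)))) (.eqTest (.comp γ α) (.comp γ β)))
        (.eqTest (.comp γ α) (.comp γ β))
  | eqAx6 (α : PathExpr A) : NDer (.eqTest α α) (.diam α)
  | eqAx7 (α β : PathExpr A) :
      NDer (nOr (.conj (.eqTest α .eps) (.eqTest β .eps)) (.eqTest α β)) (.eqTest α β)
  | eqAx8 (α β γ : PathExpr A) :
      NDer (nOr (.eqTest α (.comp β (.test (.eqTest .eps γ)))) (.eqTest α (.comp β γ)))
        (.eqTest α (.comp β γ))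

/-- Derivability of path equivalences in the axiomatic system `XP⁻`. -/
inductive PDer {A : Type} [Fintype A] : PathExpr A → PathExpr A → Prop
  | refl (α : PathExpr A) : PDer α α
  | symm {α β : PathExpr A} : PDer α β → PDer β α
  | trans {α β γ : PathExpr A} : PDer α β → PDer β γ → PDer α γ
  | congr_test {φ ψ : NodeExpr A} : NDer φ ψ → PDer (.test φ) (.test ψ)
  | congr_comp {α α' β β' : PathExpr A} :
      PDer α α' → PDer β β' → PDer (.comp α β) (.comp α' β')
  | congr_union {α α' β β' : PathExpr A} :
      PDer α α' → PDer β β' → PDer (.union α β) (.union α' β')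
  | prAx1 (α β : PathExpr A) : PDer (.comp (.comp α (.test (.neg (.diam β)))) β) botP
  | prAx2 : PDer (.test topN) (.eps : PathExpr A)
  | prAx3 (φ ψ : NodeExpr A) : PDer (.test (nOr φ ψ)) (.union (.test φ) (.test ψ))
  | isAx1 (α β γ : PathExpr A) : PDer (.union (.union α β) γ) (.union α (.union β γ))
  | isAx2 (α β : PathExpr A) : PDer (.union α β) (.union β α)
  | isAx3 (α : PathExpr A) : PDer (.union α α) α
  | isAx4 (α β γ : PathExpr A) : PDer (.comp α (.comp β γ)) (.comp (.comp α β) γ)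
  | isAx5l (α : PathExpr A) : PDer (.comp .eps α) α
  | isAx5r (α : PathExpr A) : PDer (.comp α .eps) α
  | isAx6l (α β γ : PathExpr A) :
      PDer (.comp α (.union β γ)) (.union (.comp α β) (.comp α γ))
  | isAx6r (α β γ : PathExpr A) :
      PDer (.comp (.union α β) γ) (.union (.comp α γ) (.comp β γ))
  | isAx7 (α : PathExpr A) : PDer (.union botP α) α
end

/-- A node expression is `XP⁻`-consistent if it is not provably equivalent to `⊥`. -/
def NConsistent [Fintype A] (φ : NodeExpr A) : Prop := ¬ NDer φ botN

/-- A path expression is `XP⁻`-consistent if it is not provably equivalent to `⊥̄`. -/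
def PConsistent [Fintype A] (α : PathExpr A) : Prop := ¬ PDer α botP

/-- The normal form `a ∧ ⋀_{d ∈ C} d ∧ ⋀_{d ∈ D∖C} ¬d`, built along the canonical listing `D`. -/
noncomputable def mkNF (a : A) (C D : List (NodeExpr A)) : NodeExpr A :=
  D.foldl (fun acc d => .conj acc (if d ∈ C then d else .neg d)) (.lab a)

/-- The canonical lists of normal-form path expressions (first component)
and normal-form node expressions (second component) at each level. -/
noncomputable def NF (A : Type) [Fintype A] : ℕ → List (PathExpr A) × List (NodeExpr A)
  | 0 =>
    ([.eps],
      (Finset.univ : Finset A).toList.map fun a =>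
        NodeExpr.conj (.lab a) (.eqTest .eps .eps))
  | n+1 =>
    let P := (NF A n).1
    let N := (NF A n).2
    let P' : List (PathExpr A) :=
      .eps :: N.flatMap fun ψ => P.map fun β => PathExpr.comp .down (.comp (.test ψ) β)
    let D : List (NodeExpr A) :=
      P'.flatMap fun α => P'.map fun β => NodeExpr.eqTest α β
    let cands : List (NodeExpr A) :=
      D.sublists.flatMap fun C => (Finset.univ : Finset A).toList.map fun a => mkNF a C D
    (P', cands.filter fun φ => decide (NConsistent φ))

/-- `P̂ₙ`: normal-form path expressions of level `n`. -/
noncomputable def Pnf (A : Type) [Fintype A] (n : ℕ) : Set (PathExpr A) :=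
  {α | α ∈ (NF A n).1}

/-- `N̂ₙ`: normal-form node expressions of level `n`. -/
noncomputable def Nnf (A : Type) [Fintype A] (n : ℕ) : Set (NodeExpr A) :=
  {φ | φ ∈ (NF A n).2}

/-- `D̂ₙ`: data-aware diamonds between normal-form paths of level `n`. -/
noncomputable def Dnf (A : Type) [Fintype A] (n : ℕ) : Set (NodeExpr A) :=
  {φ | ∃ α ∈ Pnf A n, ∃ β ∈ Pnf A n, φ = NodeExpr.eqTest α β}

/-- The conjuncts of a node expression (flattening `∧`). -/
def conjuncts : NodeExpr A → List (NodeExpr A)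
  | .conj φ ψ => conjuncts φ ++ conjuncts ψ
  | φ => [φ]

/-- `δ` is a conjunct of `ψ`. -/
def IsConjunct (δ ψ : NodeExpr A) : Prop := δ ∈ conjuncts ψ

/-- Length of a path expression. -/
def plen : PathExpr A → ℕ
  | .eps => 0
  | .down => 1
  | .test _ => 0
  | .comp α β => plen α + plen β
  | .union α β => max (plen α) (plen β)

mutual
/-- Downward depth of a node expression. -/
def ndd : NodeExpr A → ℕ
  | .lab _ => 0
  | .neg φ => ndd φ
  | .conj φ ψ => max (ndd φ) (ndd ψ)
  | .diam α => pdd α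
  | .eqTest α β => max (pdd α) (pdd β)

/-- Downward depth of a path expression. -/
def pdd : PathExpr A → ℕ
  | .eps => 0
  | .down => 1
  | .test φ => ndd φ
  | .comp α β => max (max (pdd α) (pdd β)) (plen α + pdd β)
  | .union α β => max (pdd α) (pdd β)
end

/-- The path `↓[ψ]α`. -/
def dPath (ψ : NodeExpr A) (α : PathExpr A) : PathExpr A :=
  .comp .down (.comp (.test ψ) α)

/-- A path expression whose leftmost symbol is `↓`. -/
def startsWithDown : PathExpr A → Prop
  | .down => True
  | .comp α _ => startsWithDown α
  | _ => False

end XPathMinus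

/-!
Each normal form of level `n + 1` is a conjunction that fixes the label and, for every test
`d ∈ D̂ₙ₊₁`, contains either `d` or `¬d` (at level `0`, just the label). Two distinct normal forms
therefore contain contradictory conjuncts: two different labels, excluded by the label axiom
`a ∧ b ≡ ⊥`, or some `d` against `¬d`. The Boolean laws that collapse such a conjunction to `⊥`
come from Huntington's axiom `ndAx1` and the semiring laws of `∪`, which `∨` inherits through
`φ ∨ ψ ≡ ⟨[φ] ∪ [ψ]⟩`.
-/

namespace XPathMinus

section Derivations

variable {A : Type} [Fintype A]

instance : @Trans (NodeExpr A) (NodeExpr A) (NodeExpr A) NDer NDer NDer := ⟨NDer.trans⟩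

theorem NDer.congr_or {φ φ' ψ ψ' : NodeExpr A} (h₁ : NDer φ φ') (h₂ : NDer ψ ψ') :
    NDer (nOr φ ψ) (nOr φ' ψ') :=
  .congr_neg (.congr_conj (.congr_neg h₁) (.congr_neg h₂))

theorem NDer.or_diam_union (φ ψ : NodeExpr A) :
    NDer (nOr φ ψ) (.diam (.union (.test φ) (.test ψ))) :=
  (NDer.ndAx2 _).symm.trans (.congr_diam (.prAx3 φ ψ))

theorem NDer.or_comm (φ ψ : NodeExpr A) : NDer (nOr φ ψ) (nOr ψ φ) :=
  (or_diam_union φ ψ).trans ((congr_diam (.isAx2 _ _)).trans (or_diam_union ψ φ).symm)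

theorem NDer.or_assoc (φ ψ χ : NodeExpr A) : NDer (nOr (nOr φ ψ) χ) (nOr φ (nOr ψ χ)) :=
  calc nOr (nOr φ ψ) χ
      NDer _ (.diam (.union (.test (nOr φ ψ)) (.test χ))) := or_diam_union _ _
      NDer _ (.diam (.union (.union (.test φ) (.test ψ)) (.test χ))) :=
          congr_diam (.congr_union (.prAx3 φ ψ) (.refl _))
      NDer _ (.diam (.union (.test φ) (.union (.test ψ) (.test χ)))) := congr_diam (.isAx1 _ _ _)
      NDer _ (.diam (.union (.test φ) (.test (nOr ψ χ)))) :=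
          congr_diam (.congr_union (.refl _) (PDer.prAx3 ψ χ).symm)
      NDer _ (nOr φ (nOr ψ χ)) := (or_diam_union _ _).symm

theorem NDer.or_self (φ : NodeExpr A) : NDer (nOr φ φ) φ :=
  (or_diam_union φ φ).trans ((congr_diam (.isAx3 _)).trans (ndAx2 φ))

theorem NDer.or_bot (φ : NodeExpr A) : NDer (nOr φ botN) φ :=
  (or_diam_union φ botN).trans ((congr_diam ((PDer.isAx2 _ _).trans (.isAx7 _))).trans (ndAx2 φ))

theorem NDer.bot_or (φ : NodeExpr A) : NDer (nOr botN φ) φ :=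
  (or_comm botN φ).trans (or_bot φ)

theorem NDer.top_neg_or_neg_neg (φ : NodeExpr A) :
    NDer topN (nOr (.neg φ) (.neg (.neg φ))) :=
  (ndAx1 topN φ).trans (congr_or (congr_neg (bot_or φ)) (congr_neg (bot_or (.neg φ))))

theorem NDer.neg_neg (φ : NodeExpr A) : NDer (.neg (.neg φ)) φ :=
  calc .neg (.neg φ)
      NDer _ (nOr (.neg (.neg φ)) botN) := (or_bot _).symm
      NDer _ (nOr (.neg (nOr (.neg φ) (.neg φ))) (.neg (nOr (.neg φ) (.neg (.neg φ))))) :=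
          congr_or (congr_neg (or_self _)).symm (congr_neg (top_neg_or_neg_neg φ))
      NDer _ φ := (ndAx1 φ (.neg φ)).symm

theorem NDer.or_neg_self (φ : NodeExpr A) : NDer (nOr φ (.neg φ)) topN :=
  ((top_neg_or_neg_neg φ).trans ((congr_or (.refl _) (neg_neg φ)).trans (or_comm _ φ))).symm

theorem NDer.or_top (φ : NodeExpr A) : NDer (nOr φ topN) topN :=
  calc nOr φ topN
      NDer _ (nOr φ (nOr φ (.neg φ))) := congr_or (.refl φ) (or_neg_self φ).symm
      NDer _ (nOr (nOr φ φ) (.neg φ)) := (or_assoc φ φ _).symm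
      NDer _ (nOr φ (.neg φ)) := congr_or (or_self φ) (.refl _)
      NDer _ topN := or_neg_self φ

theorem NDer.conj_as_neg_or (φ ψ : NodeExpr A) :
    NDer (.conj φ ψ) (.neg (nOr (.neg φ) (.neg ψ))) :=
  ((neg_neg _).trans (congr_conj (neg_neg φ) (neg_neg ψ))).symm

theorem NDer.neg_conj (φ ψ : NodeExpr A) : NDer (.neg (.conj φ ψ)) (nOr (.neg φ) (.neg ψ)) :=
  (congr_neg (conj_as_neg_or φ ψ)).trans (neg_neg _)

theorem NDer.conj_comm (φ ψ : NodeExpr A) : NDer (.conj φ ψ) (.conj ψ φ) :=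
  (conj_as_neg_or φ ψ).trans ((congr_neg (or_comm _ _)).trans (conj_as_neg_or ψ φ).symm)

theorem NDer.conj_assoc (φ ψ χ : NodeExpr A) :
    NDer (.conj (.conj φ ψ) χ) (.conj φ (.conj ψ χ)) :=
  calc .conj (.conj φ ψ) χ
      NDer _ (.neg (nOr (.neg (.conj φ ψ)) (.neg χ))) := conj_as_neg_or _ _
      NDer _ (.neg (nOr (nOr (.neg φ) (.neg ψ)) (.neg χ))) :=
          congr_neg (congr_or (neg_conj φ ψ) (.refl _))
      NDer _ (.neg (nOr (.neg φ) (nOr (.neg ψ) (.neg χ)))) := congr_neg (or_assoc _ _ _)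
      NDer _ (.neg (nOr (.neg φ) (.neg (.conj ψ χ)))) :=
          congr_neg (congr_or (.refl _) (neg_conj ψ χ).symm)
      NDer _ (.conj φ (.conj ψ χ)) := (conj_as_neg_or _ _).symm

theorem NDer.conj_self (φ : NodeExpr A) : NDer (.conj φ φ) φ :=
  (conj_as_neg_or φ φ).trans ((congr_neg (or_self _)).trans (neg_neg φ))

theorem NDer.conj_bot (φ : NodeExpr A) : NDer (.conj φ botN) botN :=
  (conj_as_neg_or φ botN).trans (congr_neg ((congr_or (.refl _) (neg_neg topN)).trans (or_top _)))

theorem NDer.conj_neg_self (φ : NodeExpr A) : NDer (.conj φ (.neg φ)) botN :=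
  (conj_as_neg_or φ (.neg φ)).trans (congr_neg (top_neg_or_neg_neg φ).symm)

theorem NDer.neg_conj_self (φ : NodeExpr A) : NDer (.conj (.neg φ) φ) botN :=
  (conj_comm _ _).trans (conj_neg_self φ)

theorem NDer.self_conj_of_mem_conjuncts :
    ∀ {φ δ : NodeExpr A}, δ ∈ conjuncts φ → NDer φ (.conj φ δ)
  | .conj φ₁ φ₂, δ, h => by
    rcases List.mem_append.1 h with h | h
    · calc .conj φ₁ φ₂
          NDer _ (.conj (.conj φ₁ δ) φ₂) :=
              congr_conj (self_conj_of_mem_conjuncts h) (.refl _)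
          NDer _ (.conj φ₁ (.conj δ φ₂)) := conj_assoc _ _ _
          NDer _ (.conj φ₁ (.conj φ₂ δ)) := congr_conj (.refl _) (conj_comm _ _)
          NDer _ (.conj (.conj φ₁ φ₂) δ) := (conj_assoc _ _ _).symm
    · exact (congr_conj (.refl _) (self_conj_of_mem_conjuncts h)).trans (conj_assoc _ _ _).symm
  | .lab _, _, h | .neg _, _, h | .diam _, _, h | .eqTest _ _, _, h => by
    rw [List.mem_singleton.1 h]
    exact (conj_self _).symm

theorem NDer.conj_bot_of_mem_conjuncts {φ ψ δ δ' : NodeExpr A}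
    (hδ : δ ∈ conjuncts φ) (hδ' : δ' ∈ conjuncts ψ) (h : NDer (.conj δ δ') botN) :
    NDer (.conj φ ψ) botN :=
  calc .conj φ ψ
      NDer _ (.conj (.conj φ δ) (.conj ψ δ')) :=
          congr_conj (self_conj_of_mem_conjuncts hδ) (self_conj_of_mem_conjuncts hδ')
      NDer _ (.conj φ (.conj (.conj δ ψ) δ')) :=
          (conj_assoc _ _ _).trans (congr_conj (.refl _) (conj_assoc _ _ _).symm)
      NDer _ (.conj φ (.conj ψ (.conj δ δ'))) :=
          congr_conj (.refl _) ((congr_conj (conj_comm _ _) (.refl _)).trans (conj_assoc _ _ _))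
      NDer _ (.conj φ botN) := congr_conj (.refl _) ((congr_conj (.refl _) h).trans (conj_bot ψ))
      NDer _ botN := conj_bot φ

end Derivations

section NormalForms

variable {A : Type}

theorem conjuncts_foldl_conj (f : NodeExpr A → NodeExpr A) (D : List (NodeExpr A))
    (init : NodeExpr A) :
    conjuncts (D.foldl (fun acc d => .conj acc (f d)) init)
      = conjuncts init ++ D.flatMap fun d => conjuncts (f d) := by
  induction D generalizing init with
  | nil => simp
  | cons d D ih => simp [ih, conjuncts]

theorem conjuncts_mkNF (a : A) (C D : List (NodeExpr A)) :
    conjuncts (mkNF a C D)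
      = .lab a :: D.flatMap fun d => conjuncts (if d ∈ C then d else .neg d) :=
  conjuncts_foldl_conj _ D _

theorem lab_mem_conjuncts_mkNF (a : A) (C D : List (NodeExpr A)) :
    .lab a ∈ conjuncts (mkNF a C D) := by
  rw [conjuncts_mkNF]
  exact List.mem_cons_self

theorem mem_conjuncts_mkNF {a : A} {C D : List (NodeExpr A)} {d : NodeExpr A}
    (hdD : d ∈ D) (hdC : d ∈ C) (hd : conjuncts d = [d]) : d ∈ conjuncts (mkNF a C D) := by
  rw [conjuncts_mkNF]
  exact List.mem_cons_of_mem _ (List.mem_flatMap.2 ⟨d, hdD, by simp [hdC, hd]⟩)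

theorem neg_mem_conjuncts_mkNF {a : A} {C D : List (NodeExpr A)} {d : NodeExpr A}
    (hdD : d ∈ D) (hdC : d ∉ C) : .neg d ∈ conjuncts (mkNF a C D) := by
  rw [conjuncts_mkNF]
  exact List.mem_cons_of_mem _ (List.mem_flatMap.2 ⟨d, hdD, by simp [hdC, conjuncts]⟩)

theorem mkNF_congr (a : A) {C C' D : List (NodeExpr A)} (h : ∀ d ∈ D, (d ∈ C ↔ d ∈ C')) :
    mkNF a C D = mkNF a C' D :=
  List.foldl_ext _ _ _ fun _ d hd => by simp only [h d hd]

theorem NDer.mkNF_conj_mkNF_bot_of_ne [Fintype A] {a b : A} {C C' D : List (NodeExpr A)}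
    (hD : ∀ d ∈ D, conjuncts d = [d]) (hne : mkNF a C D ≠ mkNF b C' D) :
    NDer (.conj (mkNF a C D) (mkNF b C' D)) botN := by
  by_cases hab : a = b
  · subst hab
    obtain ⟨d, hdD, hdC⟩ : ∃ d ∈ D, ¬(d ∈ C ↔ d ∈ C') := by
      by_contra! h
      exact hne (mkNF_congr a h)
    by_cases hd : d ∈ C
    · have hd' : d ∉ C' := fun h => hdC (iff_of_true hd h)
      exact conj_bot_of_mem_conjuncts (mem_conjuncts_mkNF hdD hd (hD d hdD))
        (neg_mem_conjuncts_mkNF hdD hd') (conj_neg_self d)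
    · have hd' : d ∈ C' := by tauto
      exact conj_bot_of_mem_conjuncts (neg_mem_conjuncts_mkNF hdD hd)
        (mem_conjuncts_mkNF hdD hd' (hD d hdD)) (neg_conj_self d)
  · exact conj_bot_of_mem_conjuncts (lab_mem_conjuncts_mkNF a C D) (lab_mem_conjuncts_mkNF b C' D)
      (lbAx2 hab).symm

def eqTests (P : List (PathExpr A)) : List (NodeExpr A) :=
  P.flatMap fun α => P.map fun β => .eqTest α β

theorem conjuncts_of_mem_eqTests {P : List (PathExpr A)} {d : NodeExpr A}
    (hd : d ∈ eqTests P) : conjuncts d = [d] := by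
  obtain ⟨α, -, β, -, rfl⟩ := by simpa [eqTests] using hd
  rfl

theorem exists_of_mem_Nnf_zero [Fintype A] {φ : NodeExpr A} (hφ : φ ∈ Nnf A 0) :
    ∃ a, φ = .conj (.lab a) (.eqTest .eps .eps) := by
  obtain ⟨a, -, rfl⟩ := by simpa [Nnf, NF] using hφ
  exact ⟨a, rfl⟩

theorem exists_mkNF_of_mem_Nnf_succ [Fintype A] {n : ℕ} {φ : NodeExpr A}
    (hφ : φ ∈ Nnf A (n + 1)) : ∃ a C, φ = mkNF a C (eqTests (NF A (n + 1)).1) := by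
  obtain ⟨⟨C, -, a, -, rfl⟩, -⟩ := by simpa [Nnf, NF] using hφ
  exact ⟨a, C, rfl⟩

end NormalForms

end XPathMinus

/-- Distinct normal forms of the same level are jointly `XP⁻`-inconsistent. -/
theorem XPathMinus.distinct_nf_inconsistent {A : Type} [Fintype A]
    (hA : 1 < Fintype.card A) (n : ℕ) (φ ψ : NodeExpr A)
    (hφ : φ ∈ Nnf A n) (hψ : ψ ∈ Nnf A n) (hne : φ ≠ ψ) :
    NDer (NodeExpr.conj φ ψ) botN := by
  cases n with
  | zero =>
    obtain ⟨a, rfl⟩ := exists_of_mem_Nnf_zero hφ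
    obtain ⟨b, rfl⟩ := exists_of_mem_Nnf_zero hψ
    have hab : a ≠ b := by
      rintro rfl
      exact hne rfl
    exact NDer.conj_bot_of_mem_conjuncts List.mem_cons_self List.mem_cons_self
      (NDer.lbAx2 hab).symm
  | succ n =>
    obtain ⟨a, C, rfl⟩ := exists_mkNF_of_mem_Nnf_succ hφ
    obtain ⟨b, C', rfl⟩ := exists_mkNF_of_mem_Nnf_succ hψ
    exact NDer.mkNF_conj_mkNF_bot_of_ne (fun _ => conjuncts_of_mem_eqTests) hne
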